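/- Let P be a real polynomial of degree n ≥ 2 whose zeros are all real and distinct. Then for every j ∈ {0, ..., n-1} and all real x, (P^{(j)})'(x)^2 - P^{(j)}(x) · (P^{(j)})''(x) > 0. -/

import Mathlib

/-!
Write `p = a ∏ (X - r)` over its simple real roots. Then `p' ^ 2 - p p''` equals
`a ^ 2 ∑ᵣ ∏_{r' ≠ r} (X - r') ^ 2`, a sum of squares, and at any `x` the summand indexed by
`x` itself (or by any root, if `x` is not a root) is nonzero because the roots are simple.
By Rolle's theorem every derivative of `p` again has only simple real roots.
-/

open Polynomial Finset

namespace Polynomial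

section CommRing

variable {R : Type*} [CommRing R]

noncomputable def laguerre (p : R[X]) : R[X] := derivative p ^ 2 - p * derivative (derivative p)

lemma laguerre_C_mul (a : R) (p : R[X]) : laguerre (C a * p) = C a ^ 2 * laguerre p := by
  simp only [laguerre, derivative_C_mul]
  ring

lemma laguerre_X_sub_C_mul (r : R) (p : R[X]) :
    laguerre ((X - C r) * p) = p ^ 2 + (X - C r) ^ 2 * laguerre p := by
  simp only [laguerre, derivative_mul, derivative_sub, derivative_X, derivative_C, sub_zero,
    one_mul, derivative_add]
  ring

lemma laguerre_prod_X_sub_C [DecidableEq R] (s : Finset R) :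
    laguerre (∏ r ∈ s, (X - C r)) = ∑ r ∈ s, (∏ r' ∈ s.erase r, (X - C r')) ^ 2 := by
  induction s using Finset.induction_on with
  | empty => simp [laguerre]
  | insert a s ha ih =>
    rw [prod_insert ha, laguerre_X_sub_C_mul, ih, sum_insert ha, erase_insert ha, mul_sum]
    refine congrArg (_ + ·) (sum_congr rfl fun r hr => ?_)
    rw [erase_insert_of_ne (ne_of_mem_of_not_mem hr ha).symm,
      prod_insert fun h => ha (mem_of_mem_erase h), mul_pow]

end CommRing

lemma eval_laguerre_prod_X_sub_C_pos {K : Type*} [CommRing K] [LinearOrder K] [IsStrictOrderedRing K]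
    {s : Finset K} (hs : s.Nonempty) (x : K) :
    0 < (laguerre (∏ r ∈ s, (X - C r))).eval x := by
  classical
  obtain ⟨r, hr, hxr⟩ : ∃ r ∈ s, x ∉ s.erase r := by
    by_cases hx : x ∈ s
    · exact ⟨x, hx, notMem_erase x s⟩
    · obtain ⟨r, hr⟩ := hs
      exact ⟨r, hr, fun h => hx (mem_of_mem_erase h)⟩
  have hne : (∏ r' ∈ s.erase r, (X - C r')).eval x ≠ 0 := by
    rw [eval_prod]
    exact prod_ne_zero_iff.2 fun r' hr' => by
      simpa [sub_eq_zero] using (ne_of_mem_of_not_mem hr' hxr).symm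
  rw [laguerre_prod_X_sub_C, eval_finsetSum]
  exact sum_pos' (fun r' _ => by rw [eval_pow]; positivity) ⟨r, hr, by rw [eval_pow]; positivity⟩

lemma natDegree_iterate_derivative_eq {R : Type*} [Semiring R] [IsAddTorsionFree R]
    (p : R[X]) (k : ℕ) : (derivative^[k] p).natDegree = p.natDegree - k := by
  induction k with
  | zero => rfl
  | succ k ih => rw [Function.iterate_succ_apply', natDegree_derivative, ih, Nat.sub_sub]

def HasSimpleRealRoots (p : ℝ[X]) : Prop :=
  Multiset.card p.roots = p.natDegree ∧ p.roots.Nodup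

namespace HasSimpleRealRoots

variable {p : ℝ[X]}

lemma eq_C_leadingCoeff_mul_prod (h : HasSimpleRealRoots p) :
    p = C p.leadingCoeff * ∏ r ∈ p.roots.toFinset, (X - C r) := by
  conv_lhs => rw [← C_leadingCoeff_mul_prod_multiset_X_sub_C h.1]
  rw [Finset.prod, Multiset.toFinset_val, Multiset.dedup_eq_self.2 h.2]

lemma eval_laguerre_pos (h : HasSimpleRealRoots p) (hp : 0 < p.natDegree) (x : ℝ) :
    0 < (laguerre p).eval x := by
  have hlc : p.leadingCoeff ≠ 0 := leadingCoeff_ne_zero.2 (ne_zero_of_natDegree_gt hp)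
  have hs : p.roots.toFinset.Nonempty := by
    rw [← card_pos, Multiset.toFinset_card_of_nodup h.2, h.1]
    exact hp
  rw [h.eq_C_leadingCoeff_mul_prod, laguerre_C_mul, eval_mul, eval_pow, eval_C]
  exact mul_pos (by positivity) (eval_laguerre_prod_X_sub_C_pos hs x)

lemma derivative (h : HasSimpleRealRoots p) : HasSimpleRealRoots (Polynomial.derivative p) := by
  have hcard : p.roots.toFinset.card = p.natDegree := by
    rw [Multiset.toFinset_card_of_nodup h.2, h.1]
  -- Rolle gives `p'` at least `deg p - 1 = deg p'` distinct roots, so they are all simple.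
  have hRolle := p.card_roots_toFinset_le_derivative
  have hdeg := natDegree_derivative p
  have hroots := card_roots' (Polynomial.derivative p)
  have hdedup := Multiset.toFinset_card_le (Polynomial.derivative p).roots
  exact ⟨by omega, Multiset.toFinset_card_eq_card_iff_nodup.1 (by omega)⟩

lemma iterate_derivative (h : HasSimpleRealRoots p) (k : ℕ) :
    HasSimpleRealRoots (Polynomial.derivative^[k] p) := by
  induction k with
  | zero => exact h
  | succ k ih =>
    rw [Function.iterate_succ_apply']
    exact ih.derivative

end HasSimpleRealRoots

end Polynomial

theorem forward_direction_general (n : ℕ) (P : ℝ[X]) (hdeg : P.natDegree = n)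
    (hroots : P.roots.card = n ∧ P.roots.Nodup) :
    ∀ j < n, ∀ x : ℝ,
      ((derivative (derivative^[j] P)).eval x) ^ 2 -
        (derivative^[j] P).eval x *
          ((derivative (derivative (derivative^[j] P))).eval x) > 0 := by
  intro j hj x
  have hP : HasSimpleRealRoots P := ⟨hroots.1.trans hdeg.symm, hroots.2⟩
  have hdeg_pos : 0 < (derivative^[j] P).natDegree := by
    rw [natDegree_iterate_derivative_eq, hdeg]
    omega
  have hpos := (hP.iterate_derivative j).eval_laguerre_pos hdeg_pos x
  rwa [laguerre, eval_sub, eval_pow, eval_mul] at hpos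

theorem forward_direction (n : ℕ) (hn : 2 ≤ n) (P : ℝ[X]) (hdeg : P.natDegree = n)
    (hroots : P.roots.card = n ∧ P.roots.Nodup) :
    ∀ j < n, ∀ x : ℝ,
      ((derivative (derivative^[j] P)).eval x) ^ 2 -
        (derivative^[j] P).eval x *
          ((derivative (derivative (derivative^[j] P))).eval x) > 0 :=
  forward_direction_general n P hdeg hroots
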